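/- arXiv:1202.0523 — 8 statements merged into one kernel-verified Lean document; each statement's English description precedes it below -/
import Mathlib

section
/- Let f : ℝ² → ℝ be C¹, and let w, u : [t₀, T) → ℝ be differentiable functions such that w'(t) < f(t, w(t)) for all t in [t₀, T), u'(t) = f(t, u(t)) for all t in [t₀, T), and w(t₀) ≤ u(t₀). Then w(t) < u(t) for all t in (t₀, T). -/
open Set

theorem HasDerivWithinAt.nonpos_of_isMinOn_Icc_right {g : ℝ → ℝ} {g' a b : ℝ} (hab : a < b)
    (hg : HasDerivWithinAt g g' (Icc a b) b) (hmin : IsMinOn g (Icc a b) b) : g' ≤ 0 := by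
  have hdir : a - b ∈ posTangentConeAt (Icc a b) b :=
    sub_mem_posTangentConeAt_of_segment_subset (by rw [segment_symm, segment_eq_Icc hab.le])
  have hslope : 0 ≤ (a - b) * g' := by
    simpa using hmin.localize.hasFDerivWithinAt_nonneg hg hdir
  exact nonpos_of_mul_nonneg_right hslope (sub_neg.2 hab)

theorem image_lt_of_deriv_lt_deriv_boundary {f f' B B' : ℝ → ℝ} {a b : ℝ}
    (hf : ∀ x ∈ Ico a b, HasDerivAt f (f' x) x) (hB : ∀ x ∈ Ico a b, HasDerivAt B (B' x) x)
    (ha : f a ≤ B a) (bound : ∀ x ∈ Ico a b, f x = B x → f' x < B' x) :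
    ∀ x ∈ Ioo a b, f x < B x := by
  rintro t ⟨hat, htb⟩
  have hsub : Icc a t ⊆ Ico a b := Icc_subset_Ico_right htb
  have hle : ∀ x ∈ Icc a t, f x ≤ B x :=
    image_le_of_deriv_right_lt_deriv_boundary'
      (fun x hx => (hf x (hsub hx)).continuousAt.continuousWithinAt)
      (fun x hx => (hf x (hsub (Ico_subset_Icc_self hx))).hasDerivWithinAt) ha
      (fun x hx => (hB x (hsub hx)).continuousAt.continuousWithinAt)
      (fun x hx => (hB x (hsub (Ico_subset_Icc_self hx))).hasDerivWithinAt)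
      (fun x hx => bound x (hsub (Ico_subset_Icc_self hx)))
  refine (hle t (right_mem_Icc.2 hat.le)).lt_of_ne fun heq => ?_
  have htmem : t ∈ Ico a b := ⟨hat.le, htb⟩
  -- at a first contact point `B - f` has a minimum from the left, so its derivative is `≤ 0`
  have hmin : IsMinOn (fun x => B x - f x) (Icc a t) t := fun x hx => by
    simpa [heq] using hle x hx
  have hderiv := ((hB t htmem).sub (hf t htmem)).hasDerivWithinAt (s := Icc a t)
  linarith [hderiv.nonpos_of_isMinOn_Icc_right hat hmin, bound t htmem heq]

theorem subsolution_comparison_general (f : ℝ × ℝ → ℝ)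
    (t₀ T : ℝ) (w u : ℝ → ℝ)
    (hw : ∀ t ∈ Set.Ico t₀ T, DifferentiableAt ℝ w t)
    (hw' : ∀ t ∈ Set.Ico t₀ T, deriv w t < f (t, w t))
    (hu : ∀ t ∈ Set.Ico t₀ T, DifferentiableAt ℝ u t)
    (hu' : ∀ t ∈ Set.Ico t₀ T, deriv u t = f (t, u t))
    (h0 : w t₀ ≤ u t₀) :
    ∀ t ∈ Set.Ioo t₀ T, w t < u t :=
  image_lt_of_deriv_lt_deriv_boundary (fun t ht => (hw t ht).hasDerivAt)
    (fun t ht => (hu t ht).hasDerivAt) h0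
    (fun t ht heq => by rw [hu' t ht, ← heq]; exact hw' t ht)

/-- Classical subsolution comparison lemma: a strict subsolution starting below a
solution of `u' = f(t,u)` stays strictly below it on `(t₀, T)`. -/
theorem subsolution_comparison (f : ℝ × ℝ → ℝ) (hf : ContDiff ℝ 1 f)
    (t₀ T : ℝ) (w u : ℝ → ℝ)
    (hw : ∀ t ∈ Set.Ico t₀ T, DifferentiableAt ℝ w t)
    (hw' : ∀ t ∈ Set.Ico t₀ T, deriv w t < f (t, w t))
    (hu : ∀ t ∈ Set.Ico t₀ T, DifferentiableAt ℝ u t)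
    (hu' : ∀ t ∈ Set.Ico t₀ T, deriv u t = f (t, u t))
    (h0 : w t₀ ≤ u t₀) :
    ∀ t ∈ Set.Ioo t₀ T, w t < u t :=
  subsolution_comparison_general f t₀ T w u hw hw' hu hu' h0
end

section
/- Fix ε > 0. Any maximal solution x : [0, b) → ℝ of the ODE x''(t) = (1+ε) x(t)^{1+2ε} with initial conditions x(0) = 1, x'(0) = 0 has b < +∞; more precisely, the solution satisfies x'(t)² = x(t)^{2(1+ε)} - 1 and blows up in finite time since ∫₁^∞ dσ/√(σ^{2(1+ε)} - 1) < +∞. -/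
/-!
Along a solution the energy `x'² - x^{2q}`, `q = 1 + ε`, is conserved, so `x'² = x^{2q} - 1`.
Hence `x ≥ 1`, `x'' > 0`, and superadditivity of `s ↦ s^{2q}` gives
`x' = √(x^{2q} - 1) ≥ (x - 1)^q`. A positive `y` with `y' ≥ c y^q`, `q > 1`, cannot live longer
than `y(a)^{1-q} / ((q - 1) c)`, because `y^{1-q} + (q - 1) c t` is nonincreasing and positive.
The same bound, together with `σ - 1 ≤ σ^{2q} - 1` near `σ = 1`, dominates the blow-up integrand
by `(σ - 1)^{-1/2}` and `(σ - 1)^{-q}`.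
-/

open Set MeasureTheory

theorem Convex.strictMonoOn_of_hasDerivAt_pos {D : Set ℝ} (hD : Convex ℝ D) {f f' : ℝ → ℝ}
    (hf : ∀ t ∈ D, HasDerivAt f (f' t) t) (hf' : ∀ t ∈ interior D, 0 < f' t) :
    StrictMonoOn f D :=
  strictMonoOn_of_hasDerivWithinAt_pos hD (fun t ht => (hf t ht).continuousAt.continuousWithinAt)
    (fun t ht => (hf t (interior_subset ht)).hasDerivWithinAt) hf'

theorem Convex.antitoneOn_of_hasDerivAt_nonpos {D : Set ℝ} (hD : Convex ℝ D) {f f' : ℝ → ℝ}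
    (hf : ∀ t ∈ D, HasDerivAt f (f' t) t) (hf' : ∀ t ∈ interior D, f' t ≤ 0) :
    AntitoneOn f D :=
  antitoneOn_of_hasDerivWithinAt_nonpos hD (fun t ht => (hf t ht).continuousAt.continuousWithinAt)
    (fun t ht => (hf t (interior_subset ht)).hasDerivWithinAt) hf'

-- `x t ^ p` carries no sign information when `x t < 0`, hence the intermediate value theorem.
theorem one_le_of_one_le_rpow {x : ℝ → ℝ} {a p : ℝ} (hp : 0 < p) (hx : ContinuousOn x (Ici a))
    (ha : x a = 1) (h : ∀ t ∈ Ici a, 1 ≤ x t ^ p) : ∀ t ∈ Ici a, 1 ≤ x t := by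
  intro t ht
  by_contra! hlt
  obtain ⟨s, hs, hxs⟩ : max (x t) 0 ∈ x '' Icc a t :=
    intermediate_value_Icc' ht (hx.mono Icc_subset_Ici_self)
      ⟨le_max_left _ _, ha ▸ max_le hlt.le zero_le_one⟩
  have hone : 1 ≤ max (x t) 0 ^ p := hxs ▸ h s hs.1
  exact hone.not_gt (Real.rpow_lt_one (le_max_right _ _) (max_lt hlt one_pos) hp)

theorem rpow_le_sqrt_add_one_rpow_sub_one {u q : ℝ} (hu : 0 ≤ u) (hq : 1 / 2 ≤ q) :
    u ^ q ≤ √((u + 1) ^ (2 * q) - 1) := by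
  have hsuper : u ^ (2 * q) + 1 ≤ (u + 1) ^ (2 * q) := by
    simpa using Real.add_rpow_le_rpow_add hu zero_le_one (by linarith : 1 ≤ 2 * q)
  calc u ^ q = √((u ^ q) ^ 2) := (Real.sqrt_sq (by positivity)).symm
    _ = √(u ^ (2 * q)) := by rw [← Real.rpow_mul_natCast hu, Nat.cast_ofNat, mul_comm]
    _ ≤ √((u + 1) ^ (2 * q) - 1) := Real.sqrt_le_sqrt (by linarith)

theorem hasDerivAt_energy {ε t : ℝ} (hε : 0 ≤ 1 + 2 * ε) {x x' : ℝ → ℝ}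
    (hx : HasDerivAt x (x' t) t) (hx' : HasDerivAt x' ((1 + ε) * x t ^ (1 + 2 * ε)) t) :
    HasDerivAt (fun s => x' s ^ 2 - x s ^ (2 * (1 + ε))) 0 t := by
  have hpow := hx.rpow_const (p := 2 * (1 + ε)) (Or.inr (by linarith))
  refine ((hx'.pow 2).sub hpow).congr_deriv ?_
  rw [show 2 * (1 + ε) - 1 = 1 + 2 * ε by ring]
  push_cast
  ring

theorem sq_deriv_eq_rpow_sub_one {ε b : ℝ} (hε : 0 ≤ 1 + 2 * ε) {x x' : ℝ → ℝ}
    (hx : ∀ t ∈ Ico 0 b, HasDerivAt x (x' t) t)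
    (hx' : ∀ t ∈ Ico 0 b, HasDerivAt x' ((1 + ε) * x t ^ (1 + 2 * ε)) t)
    (h0 : x 0 = 1) (h0' : x' 0 = 0) :
    ∀ t ∈ Ico 0 b, x' t ^ 2 = x t ^ (2 * (1 + ε)) - 1 := by
  intro t ⟨ht0, htb⟩
  have hsub : Icc 0 t ⊆ Ico 0 b := Icc_subset_Ico_right htb
  have hE (s) (hs : s ∈ Icc 0 t) := hasDerivAt_energy hε (hx s (hsub hs)) (hx' s (hsub hs))
  have hconst := constant_of_has_deriv_right_zero
    (fun s hs => (hE s hs).continuousAt.continuousWithinAt)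
    (fun s hs => (hE s (Ico_subset_Icc_self hs)).hasDerivWithinAt) t ⟨ht0, le_rfl⟩
  simp only [h0, h0', Real.one_rpow] at hconst
  linarith

theorem sub_le_of_rpow_le_deriv {y y' : ℝ → ℝ} {a b c q : ℝ} (hab : a < b) (hc : 0 < c)
    (hq : 1 < q) (hy : ∀ t ∈ Ico a b, HasDerivAt y (y' t) t) (hpos : ∀ t ∈ Ico a b, 0 < y t)
    (hy' : ∀ t ∈ Ico a b, c * y t ^ q ≤ y' t) :
    b - a ≤ y a ^ (1 - q) / ((q - 1) * c) := by
  have hqc : 0 < (q - 1) * c := mul_pos (by linarith) hc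
  have hderiv : ∀ t ∈ Ico a b, HasDerivAt (fun s => y s ^ (1 - q) + (q - 1) * c * s)
      ((q - 1) * y t ^ (1 - q - 1) * (c * y t ^ q - y' t)) t := by
    intro t ht
    have hinv : y t ^ q * y t ^ (1 - q - 1) = 1 := by
      rw [← Real.rpow_add (hpos t ht)]
      simp
    refine (((hy t ht).rpow_const (Or.inl (hpos t ht).ne')).add
      ((hasDerivAt_id t).const_mul ((q - 1) * c))).congr_deriv ?_
    linear_combination -(q - 1) * c * hinv
  have hanti := (convex_Ico a b).antitoneOn_of_hasDerivAt_nonpos hderiv fun t ht =>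
    mul_nonpos_of_nonneg_of_nonpos
      (mul_nonneg (by linarith) (Real.rpow_nonneg (hpos t (interior_subset ht)).le _))
      (by linarith [hy' t (interior_subset ht)])
  by_contra! hT
  have hT0 : 0 ≤ y a ^ (1 - q) / ((q - 1) * c) := by
    have := hpos a ⟨le_rfl, hab⟩
    positivity
  set t := a + y a ^ (1 - q) / ((q - 1) * c)
  have ht : t ∈ Ico a b := ⟨by linarith, by linarith⟩
  have hle := hanti ⟨le_rfl, ht.1.trans_lt ht.2⟩ ht ht.1
  have hyt : 0 < y t ^ (1 - q) := Real.rpow_pos_of_pos (hpos t ht) _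
  have hct : (q - 1) * c * t = (q - 1) * c * a + y a ^ (1 - q) := by
    rw [mul_add, mul_div_cancel₀ _ hqc.ne']
  simp only at hle
  linarith

theorem not_exists_global_solution {ε : ℝ} (hε : 0 < ε) :
    ¬ ∃ x x' : ℝ → ℝ,
      (∀ t : ℝ, 0 ≤ t → HasDerivAt x (x' t) t) ∧
      (∀ t : ℝ, 0 ≤ t → HasDerivAt x' ((1 + ε) * x t ^ (1 + 2 * ε)) t) ∧
      x 0 = 1 ∧ x' 0 = 0 := by
  rintro ⟨x, x', hx, hx', h0, h0'⟩
  have henergy : ∀ t ∈ Ici (0 : ℝ), x' t ^ 2 = x t ^ (2 * (1 + ε)) - 1 := fun t ht =>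
    sq_deriv_eq_rpow_sub_one (b := t + 1) (by linarith) (fun s hs => hx s hs.1)
      (fun s hs => hx' s hs.1) h0 h0' t ⟨ht, by linarith⟩
  have hx_ge : ∀ t ∈ Ici (0 : ℝ), 1 ≤ x t :=
    one_le_of_one_le_rpow (p := 2 * (1 + ε)) (by linarith)
      (fun t ht => (hx t ht).continuousAt.continuousWithinAt) h0
      (fun t ht => by nlinarith [henergy t ht, sq_nonneg (x' t)])
  have hx'_mono : StrictMonoOn x' (Ici 0) :=
    (convex_Ici 0).strictMonoOn_of_hasDerivAt_pos hx' fun t ht =>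
      mul_pos (by linarith) (Real.rpow_pos_of_pos (by linarith [hx_ge t (interior_subset ht)]) _)
  have hx'_pos : ∀ t ∈ Ioi (0 : ℝ), 0 < x' t := fun t ht =>
    h0' ▸ hx'_mono self_mem_Ici (mem_Ioi.1 ht).le ht
  have hx_mono : StrictMonoOn x (Ici 0) :=
    (convex_Ici 0).strictMonoOn_of_hasDerivAt_pos hx (by rwa [interior_Ici])
  have hx_gt : ∀ t ∈ Ici (1 : ℝ), 1 < x t := fun t (ht : 1 ≤ t) =>
    h0 ▸ hx_mono self_mem_Ici (mem_Ici.2 (zero_le_one.trans ht)) (zero_lt_one.trans_le ht)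
  have hbound : ∀ t ∈ Ici (1 : ℝ), 1 * (x t - 1) ^ (1 + ε) ≤ x' t := by
    intro t ht
    have ht0 : (0 : ℝ) < t := by linarith [mem_Ici.mp ht]
    calc 1 * (x t - 1) ^ (1 + ε) ≤ √((x t - 1 + 1) ^ (2 * (1 + ε)) - 1) := by
          rw [one_mul]
          exact rpow_le_sqrt_add_one_rpow_sub_one (by linarith [hx_gt t ht]) (by linarith)
      _ = x' t := by rw [sub_add_cancel, ← henergy t ht0.le, Real.sqrt_sq (hx'_pos t ht0).le]
  set T := (x 1 - 1) ^ (1 - (1 + ε)) / ((1 + ε - 1) * 1)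
  have hblow := sub_le_of_rpow_le_deriv (y := fun t => x t - 1) (a := 1) (b := 1 + (|T| + 1))
    (by linarith [abs_nonneg T]) one_pos (by linarith)
    (fun t ht => (hx t (by linarith [ht.1])).sub_const 1)
    (fun t ht => sub_pos.2 (hx_gt t ht.1)) (fun t ht => hbound t ht.1)
  linarith [le_abs_self T]

theorem integrableOn_one_div_sqrt_rpow_sub_one {q : ℝ} (hq : 1 < q) :
    IntegrableOn (fun σ : ℝ => 1 / √(σ ^ (2 * q) - 1)) (Ioi 1) := by
  rw [← (measurePreserving_add_right volume 1).integrableOn_comp_preimage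
    (measurableEmbedding_addRight 1), preimage_add_const_Ioi, sub_self]
  have hmeas : Measurable (fun u : ℝ => 1 / √((u + 1) ^ (2 * q) - 1)) := by fun_prop
  have hnear : ∀ u : ℝ, 0 < u → 1 / √((u + 1) ^ (2 * q) - 1) ≤ u ^ (-(1 / 2 : ℝ)) := by
    intro u hu
    have hle : u + 1 ≤ (u + 1) ^ (2 * q) := Real.self_le_rpow_of_one_le (by linarith) (by linarith)
    rw [Real.rpow_neg hu.le, ← Real.sqrt_eq_rpow, ← one_div]
    exact one_div_le_one_div_of_le (Real.sqrt_pos.2 hu) (Real.sqrt_le_sqrt (by linarith))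
  have hfar : ∀ u : ℝ, 0 < u → 1 / √((u + 1) ^ (2 * q) - 1) ≤ u ^ (-q) := by
    intro u hu
    rw [Real.rpow_neg hu.le, ← one_div]
    exact one_div_le_one_div_of_le (by positivity)
      (rpow_le_sqrt_add_one_rpow_sub_one hu.le (by linarith))
  rw [← Ioc_union_Ioi_eq_Ioi zero_le_one]
  refine IntegrableOn.union ?_ ?_
  · refine ((intervalIntegrable_iff_integrableOn_Ioc_of_le zero_le_one).1
      (intervalIntegral.intervalIntegrable_rpow' (r := -(1 / 2)) (by norm_num))).mono'
      hmeas.aestronglyMeasurable ((ae_restrict_iff' measurableSet_Ioc).2 ?_)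
    filter_upwards with u hu
    rw [Function.comp_apply, Real.norm_of_nonneg (by positivity)]
    exact hnear u hu.1
  · refine (integrableOn_Ioi_rpow_of_lt (a := -q) (by linarith) zero_lt_one).mono'
      hmeas.aestronglyMeasurable ((ae_restrict_iff' measurableSet_Ioi).2 ?_)
    filter_upwards with u (hu : 1 < u)
    rw [Function.comp_apply, Real.norm_of_nonneg (by positivity)]
    exact hfar u (by linarith)

/-- Finite-time blow-up for `x'' = (1+ε) x^{1+2ε}`, `x(0) = 1`, `x'(0) = 0`:
any solution satisfies the energy identity `x'(t)² = x(t)^{2(1+ε)} - 1`, there is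
no globally defined solution (so the maximal solution has `b < +∞`), and the
blow-up integral `∫₁^∞ dσ/√(σ^{2(1+ε)} - 1)` is finite. -/
theorem blow_up_superlinear_force (ε : ℝ) (hε : 0 < ε) :
    (∀ (b : ℝ) (x x' : ℝ → ℝ),
      (∀ t ∈ Set.Ico (0:ℝ) b, HasDerivAt x (x' t) t) →
      (∀ t ∈ Set.Ico (0:ℝ) b, HasDerivAt x' ((1 + ε) * x t ^ (1 + 2 * ε)) t) →
      x 0 = 1 → x' 0 = 0 →
      ∀ t ∈ Set.Ico (0:ℝ) b, (x' t) ^ 2 = x t ^ (2 * (1 + ε)) - 1) ∧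
    (¬ ∃ x x' : ℝ → ℝ,
      (∀ t : ℝ, 0 ≤ t → HasDerivAt x (x' t) t) ∧
      (∀ t : ℝ, 0 ≤ t → HasDerivAt x' ((1 + ε) * x t ^ (1 + 2 * ε)) t) ∧
      x 0 = 1 ∧ x' 0 = 0) ∧
    IntegrableOn (fun σ : ℝ => 1 / Real.sqrt (σ ^ (2 * (1 + ε)) - 1))
      (Set.Ioi 1) :=
  ⟨fun _ _ _ hx hx' h0 h0' => sq_deriv_eq_rpow_sub_one (by linarith) hx hx' h0 h0',
    not_exists_global_solution hε, integrableOn_one_div_sqrt_rpow_sub_one (by linarith)⟩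
end

section
/- Fix ε > 0. Any maximal solution x : [0,b) → ℝ of x''(t) = (1+ε) x(t)^ε x'(t) with x(0) = 1, x'(0) = 1 satisfies x'(t) = x(t)^{1+ε} (so long as x(t) ≥ 1) and is defined only on a bounded interval: b = ∫₁^∞ dσ/σ^{1+ε} = 1/ε < +∞. -/
open Set MeasureTheory

/-!
Where `x > 0` the equation reads `x'' = (x ^ (1 + ε))'`, so `x' - x ^ (1 + ε)` is conserved and
stays `0`. Hence `x' = x ^ (1 + ε) > 0` as long as `x > 0`, so `x` increases from `1` and can
never reach its first zero: `x > 0` throughout. Then `(x ^ (-ε))' = -ε`, i.e.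
`x ^ (-ε) = 1 - ε t`, and positivity of the left side forces `b ≤ 1 / ε`.
-/

theorem ContinuousOn.exists_first_zero {α δ : Type*} [ConditionallyCompleteLinearOrder α]
    [TopologicalSpace α] [OrderTopology α] [DenselyOrdered α]
    [LinearOrder δ] [TopologicalSpace δ] [OrderClosedTopology δ] [Zero δ] {f : α → δ} {a b : α}
    (hab : a ≤ b) (hf : ContinuousOn f (Icc a b)) (ha : 0 < f a) (hb : f b ≤ 0) :
    ∃ c ∈ Ioc a b, f c = 0 ∧ ∀ u ∈ Ico a c, 0 < f u := by
  let S := Icc a b ∩ f ⁻¹' Iic 0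
  have hS : IsClosed S := hf.preimage_isClosed_of_isClosed isClosed_Icc isClosed_Iic
  have hbdd : BddBelow S := ⟨a, fun u hu => hu.1.1⟩
  have hc : sInf S ∈ S := hS.csInf_mem ⟨b, ⟨hab, le_rfl⟩, hb⟩ hbdd
  have hpos : ∀ u ∈ Ico a (sInf S), 0 < f u := fun u hu => by
    by_contra! hfu
    exact hu.2.not_ge (csInf_le hbdd ⟨⟨hu.1, hu.2.le.trans hc.1.2⟩, hfu⟩)
  obtain ⟨u, hu, hfu⟩ := intermediate_value_Icc' hc.1.1 (hf.mono (Icc_subset_Icc_right hc.1.2))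
    ⟨hc.2, ha.le⟩
  have hcu : sInf S = u :=
    le_antisymm (csInf_le hbdd ⟨⟨hu.1, hu.2.trans hc.1.2⟩, hfu.le⟩) hu.2
  refine ⟨sInf S, ⟨?_, hc.1.2⟩, hcu ▸ hfu, hpos⟩
  exact lt_of_le_of_ne hc.1.1 fun h => ha.not_ge (h ▸ hc.2)

theorem eq_of_forall_hasDerivAt_zero {f : ℝ → ℝ} {a b : ℝ} (hab : a ≤ b)
    (hf : ∀ s ∈ Icc a b, HasDerivAt f 0 s) : f b = f a :=
  constant_of_has_deriv_right_zero (fun s hs => (hf s hs).continuousAt.continuousWithinAt)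
    (fun s hs => (hf s (Ico_subset_Icc_self hs)).hasDerivWithinAt) b ⟨hab, le_rfl⟩

section

variable {ε : ℝ} {x x' : ℝ → ℝ} {t : ℝ}

theorem hasDerivAt_sub_rpow_one_add (hx : HasDerivAt x (x' t) t)
    (hx' : HasDerivAt x' ((1 + ε) * x t ^ ε * x' t) t) (hpos : 0 < x t) :
    HasDerivAt (fun s => x' s - x s ^ (1 + ε)) 0 t := by
  refine (hx'.sub (hx.rpow_const (p := 1 + ε) (Or.inl hpos.ne'))).congr_deriv ?_
  rw [add_sub_cancel_left]
  ring

theorem hasDerivAt_rpow_neg_of_eq_rpow_one_add (hx : HasDerivAt x (x t ^ (1 + ε)) t)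
    (hpos : 0 < x t) : HasDerivAt (fun s => x s ^ (-ε)) (-ε) t := by
  refine (hx.rpow_const (p := -ε) (Or.inl hpos.ne')).congr_deriv ?_
  rw [mul_right_comm, ← Real.rpow_add hpos, show 1 + ε + (-ε - 1) = 0 by ring, Real.rpow_zero,
    one_mul]

end

structure IsVelocityForceSolution (ε b : ℝ) (x x' : ℝ → ℝ) : Prop where
  hasDerivAt : ∀ t ∈ Ico 0 b, HasDerivAt x (x' t) t
  hasDerivAt' : ∀ t ∈ Ico 0 b, HasDerivAt x' ((1 + ε) * x t ^ ε * x' t) t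
  zero : x 0 = 1
  zero' : x' 0 = 1

namespace IsVelocityForceSolution

variable {ε b t : ℝ} {x x' : ℝ → ℝ}

theorem continuousOn_Icc (h : IsVelocityForceSolution ε b x x') (ht : t < b) :
    ContinuousOn x (Icc 0 t) :=
  fun s hs => (h.hasDerivAt s ⟨hs.1, hs.2.trans_lt ht⟩).continuousAt.continuousWithinAt

theorem velocity_eq_of_pos (h : IsVelocityForceSolution ε b x x') (ht : t ∈ Ico 0 b)
    (hpos : ∀ s ∈ Icc 0 t, 0 < x s) : x' t = x t ^ (1 + ε) := by
  have hconst := eq_of_forall_hasDerivAt_zero ht.1 fun s hs =>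
    have hs' : s ∈ Ico 0 b := ⟨hs.1, hs.2.trans_lt ht.2⟩
    hasDerivAt_sub_rpow_one_add (h.hasDerivAt s hs') (h.hasDerivAt' s hs') (hpos s hs)
  rwa [h.zero, h.zero', Real.one_rpow, sub_self, sub_eq_zero] at hconst

theorem pos (h : IsVelocityForceSolution ε b x x') (ht : t ∈ Ico 0 b) : 0 < x t := by
  by_contra! hxt
  obtain ⟨c, hc, hxc, hpos⟩ :=
    (h.continuousOn_Icc ht.2).exists_first_zero ht.1 (h.zero ▸ one_pos) hxt
  have hcb : c < b := hc.2.trans_lt ht.2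
  have hmono : MonotoneOn x (Icc 0 c) := by
    refine monotoneOn_of_hasDerivWithinAt_nonneg (convex_Icc 0 c) (h.continuousOn_Icc hcb)
      (fun s hs => (h.hasDerivAt s ?_).hasDerivWithinAt) fun s hs => ?_ <;>
      rw [interior_Icc] at hs
    · exact ⟨hs.1.le, hs.2.trans hcb⟩
    · rw [h.velocity_eq_of_pos ⟨hs.1.le, hs.2.trans hcb⟩
        fun u hu => hpos u ⟨hu.1, hu.2.trans_lt hs.2⟩]
      exact Real.rpow_nonneg (hpos s ⟨hs.1.le, hs.2⟩).le _
  have := hmono ⟨le_rfl, hc.1.le⟩ ⟨hc.1.le, le_rfl⟩ hc.1.le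
  rw [h.zero, hxc] at this
  exact absurd this zero_lt_one.not_ge

theorem velocity_eq (h : IsVelocityForceSolution ε b x x') (ht : t ∈ Ico 0 b) :
    x' t = x t ^ (1 + ε) :=
  h.velocity_eq_of_pos ht fun _ hs => h.pos ⟨hs.1, hs.2.trans_lt ht.2⟩

theorem rpow_neg_eq (h : IsVelocityForceSolution ε b x x') (ht : t ∈ Ico 0 b) :
    x t ^ (-ε) = 1 - ε * t := by
  have hconst := eq_of_forall_hasDerivAt_zero (f := fun s => x s ^ (-ε) + ε * s) ht.1
    fun s hs =>
      have hs' : s ∈ Ico 0 b := ⟨hs.1, hs.2.trans_lt ht.2⟩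
      ((hasDerivAt_rpow_neg_of_eq_rpow_one_add (h.velocity_eq hs' ▸ h.hasDerivAt s hs')
        (h.pos hs')).add ((hasDerivAt_id s).const_mul ε)).congr_deriv (by simp)
  simp only [h.zero, Real.one_rpow, mul_zero, add_zero] at hconst
  linarith

theorem le_inv (h : IsVelocityForceSolution ε b x x') (hε : 0 < ε) : b ≤ ε⁻¹ := by
  by_contra! hb
  have hmem : ε⁻¹ ∈ Ico 0 b := ⟨inv_nonneg.2 hε.le, hb⟩
  have := h.rpow_neg_eq hmem
  rw [mul_inv_cancel₀ hε.ne', sub_self] at this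
  exact (Real.rpow_pos_of_pos (h.pos hmem) _).ne' this

end IsVelocityForceSolution

theorem integral_Ioi_one_one_div_rpow {p : ℝ} (hp : 1 < p) :
    ∫ σ in Ioi (1 : ℝ), 1 / σ ^ p = 1 / (p - 1) := by
  rw [setIntegral_congr_fun measurableSet_Ioi (g := fun σ => σ ^ (-p))
      fun σ hσ => by simp [Real.rpow_neg (zero_le_one.trans hσ.le)],
    integral_Ioi_rpow_of_lt (by linarith) one_pos, Real.one_rpow,
    show -p + 1 = -(p - 1) by ring, div_neg, neg_div, neg_neg]

/-- Finite-time blow-up for `x'' = (1+ε) x^ε x'` with `x(0) = x'(0) = 1`: in the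
region where `x ≥ 1`, any solution satisfies the first-order equation
`x'(t) = x(t)^{1+ε}`; there is no globally defined solution (the maximal interval is
bounded), and the blow-up time equals `∫₁^∞ dσ/σ^{1+ε} = 1/ε < +∞`. -/
theorem blow_up_velocity_force (ε : ℝ) (hε : 0 < ε) :
    (∀ (b : ℝ) (x x' : ℝ → ℝ),
      (∀ t ∈ Set.Ico (0:ℝ) b, HasDerivAt x (x' t) t) →
      (∀ t ∈ Set.Ico (0:ℝ) b, HasDerivAt x' ((1 + ε) * x t ^ ε * x' t) t) →
      x 0 = 1 → x' 0 = 1 →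
      ∀ t ∈ Set.Ico (0:ℝ) b, (1 ≤ x t) → x' t = x t ^ (1 + ε)) ∧
    (¬ ∃ x x' : ℝ → ℝ,
      (∀ t : ℝ, 0 ≤ t → HasDerivAt x (x' t) t) ∧
      (∀ t : ℝ, 0 ≤ t → HasDerivAt x' ((1 + ε) * x t ^ ε * x' t) t) ∧
      x 0 = 1 ∧ x' 0 = 1) ∧
    (∫ σ in Set.Ioi (1:ℝ), 1 / σ ^ (1 + ε)) = 1 / ε := by
  refine ⟨fun b x x' hx hx' hx0 hx'0 t ht _ =>
    IsVelocityForceSolution.velocity_eq ⟨hx, hx', hx0, hx'0⟩ ht, ?_, ?_⟩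
  · rintro ⟨x, x', hx, hx', hx0, hx'0⟩
    have h : IsVelocityForceSolution ε (2 * ε⁻¹) x x' :=
      ⟨fun t ht => hx t ht.1, fun t ht => hx' t ht.1, hx0, hx'0⟩
    linarith [h.le_inv hε, inv_pos.2 hε]
  · simpa using integral_Ioi_one_one_div_rpow (by linarith : 1 < 1 + ε)
end

section
/- The function x(t) = 2/(t+1) on (-1, 0] satisfies the ODE x''(t) = -x(t)·x'(t), and it is backward inextensible and backward incomplete (x(t) → +∞ as t → -1⁺). -/
open Set Filter Topology

theorem hasDerivAt_const_div_add_const_pow {𝕜 : Type*} [NontriviallyNormedField 𝕜]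
    (c a : 𝕜) (n : ℕ) {t : 𝕜} (ht : t + a ≠ 0) :
    HasDerivAt (fun s => c / (s + a) ^ n) (-(n * c) / (t + a) ^ (n + 1)) t := by
  have hpow := ((hasDerivAt_id' t).add_const a).fun_pow n
  refine ((hasDerivAt_const t c).fun_div hpow (pow_ne_zero n ht)).congr_deriv ?_
  rcases n with _ | n
  · simp
  · rw [Nat.add_sub_cancel]
    field_simp
    ring

theorem tendsto_add_const_nhdsGT {α : Type*} [AddCommGroup α] [LinearOrder α]
    [IsOrderedAddMonoid α] [TopologicalSpace α] [ContinuousAdd α] (a : α) :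
    Tendsto (fun t => t + a) (𝓝[>] (-a)) (𝓝[>] 0) := by
  refine tendsto_nhdsWithin_of_tendsto_nhds_of_eventually_within _ ?_ ?_
  · simpa using (continuous_add_const a).tendsto (-a) |>.mono_left nhdsWithin_le_nhds
  · filter_upwards [self_mem_nhdsWithin] with t ht
    simpa [← neg_lt_iff_pos_add] using ht

theorem tendsto_const_div_add_const_nhdsGT_atTop {𝕜 : Type*} [Field 𝕜] [LinearOrder 𝕜]
    [IsStrictOrderedRing 𝕜] [TopologicalSpace 𝕜] [OrderTopology 𝕜] [ContinuousAdd 𝕜]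
    {c : 𝕜} (hc : 0 < c) (a : 𝕜) :
    Tendsto (fun t => c / (t + a)) (𝓝[>] (-a)) atTop := by
  simpa only [div_eq_mul_inv, Pi.inv_apply] using
    (tendsto_add_const_nhdsGT a).inv_tendsto_nhdsGT_zero.const_mul_atTop hc

/-- The function `x(t) = 2/(t+1)` on `(-1, 0]` satisfies `x'' = -x·x'` (with
`x' (t) = -2/(t+1)²`), and it is backward inextensible and backward incomplete:
`x(t) → +∞` as `t → -1⁺`. -/
theorem backward_incomplete_friction :
    (∀ t ∈ Set.Ioc (-1 : ℝ) 0,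
      HasDerivAt (fun s : ℝ => 2 / (s + 1)) (-2 / (t + 1) ^ 2) t ∧
      HasDerivAt (fun s : ℝ => -2 / (s + 1) ^ 2)
        (-(2 / (t + 1)) * (-2 / (t + 1) ^ 2)) t) ∧
    Filter.Tendsto (fun t : ℝ => 2 / (t + 1))
      (nhdsWithin (-1) (Set.Ioi (-1))) Filter.atTop := by
  refine ⟨fun t ht => ?_, ?_⟩
  · have ht' : t + 1 ≠ 0 := by linarith [ht.1]
    refine ⟨by simpa using hasDerivAt_const_div_add_const_pow (2 : ℝ) 1 1 ht', ?_⟩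
    refine (hasDerivAt_const_div_add_const_pow (-2 : ℝ) 1 2 ht').congr_deriv ?_
    field_simp
    ring
  · simpa using tendsto_const_div_add_const_nhdsGT_atTop two_pos (1 : ℝ)
end

section
/- Let v : [0,b) → ℝ be C¹ with v(0) = 0, 0 < b < ∞, and suppose v'(t) - 2c·v(t) < 2(α - 𝒱₀(ℓ(t))) for all t ∈ [0,b), where c > 0, α ∈ ℝ, 𝒱₀ : [0,∞) → ℝ is non-increasing C¹ with α > 𝒱₀(0), and ℓ : [0,b) → [0,∞) is continuous non-decreasing. Let v₀ be the solution of v₀'(t) - 2c·v₀(t) = 2(α - 𝒱₀(ℓ(t))) with v₀(0) = 0. Then v'(t) ≤ v₀'(t) ≤ 2e^{2cb}(α - 𝒱₀(ℓ(t))) for all t ∈ [0,b). -/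
/-!
Both inequalities are comparisons for the operator `y ↦ y' - 2cy`. First, `v` is a subsolution
of the equation of `v₀`, so `v ≤ v₀` and hence `v' < 2cv + 2(α - 𝒱₀(ℓ t)) ≤ v₀'`. Second, since
`𝒱₀ ∘ ℓ` is non-increasing, on `[0, t]` the function `v₀` is a subsolution of
`y' = 2cy + 2(α - 𝒱₀(ℓ t))`, whose solution from `0` is `(α - 𝒱₀(ℓ t))(e^{2cs} - 1)/c`;
evaluating at `s = t` and using `t < b` gives the bound on `v₀'(t)`.
-/

open Set Real

/-- The weight `exp (-k x)` turns the hypothesis into `(exp (-k x) * (f x - g x))' ≤ 0`. -/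
theorem image_le_of_deriv_sub_mul_le {f f' g g' : ℝ → ℝ} {a b k : ℝ}
    (hf : ∀ x ∈ Icc a b, HasDerivAt f (f' x) x) (hg : ∀ x ∈ Icc a b, HasDerivAt g (g' x) x)
    (ha : f a ≤ g a) (hle : ∀ x ∈ Ico a b, f' x - k * f x ≤ g' x - k * g x) :
    ∀ ⦃x⦄, x ∈ Icc a b → f x ≤ g x := by
  set F : ℝ → ℝ := fun x => exp (-(k * x)) * (f x - g x)
  have hF : ∀ x ∈ Icc a b,
      HasDerivAt F (exp (-(k * x)) * ((f' x - k * f x) - (g' x - k * g x))) x := by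
    intro x hx
    have hexp : HasDerivAt (fun x => exp (-(k * x))) (exp (-(k * x)) * -k) x := by
      simpa using ((hasDerivAt_id x).const_mul k).neg.exp
    exact (hexp.mul ((hf x hx).sub (hg x hx))).congr_deriv (by simp only [Pi.sub_apply]; ring)
  have hF_nonpos : ∀ ⦃x⦄, x ∈ Icc a b → F x ≤ (0 : ℝ → ℝ) x :=
    image_le_of_deriv_right_le_deriv_boundary
      (fun x hx => (hF x hx).continuousAt.continuousWithinAt)
      (fun x hx => (hF x (Ico_subset_Icc_self hx)).hasDerivWithinAt)
      (mul_nonpos_of_nonneg_of_nonpos (exp_pos _).le (sub_nonpos.2 ha)) continuousOn_const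
      (fun x _ => hasDerivWithinAt_const x _ (0 : ℝ))
      (fun x hx => mul_nonpos_of_nonneg_of_nonpos (exp_pos _).le (by linarith [hle x hx]))
  intro x hx
  have := hF_nonpos hx
  simp only [F, Pi.zero_apply] at this
  linarith [nonpos_of_mul_nonpos_right this (exp_pos _)]

theorem hasDerivAt_div_mul_exp_sub_one {k : ℝ} (hk : k ≠ 0) (A x : ℝ) :
    HasDerivAt (fun s => A / k * (exp (k * s) - 1)) (k * (A / k * (exp (k * x) - 1)) + A) x := by
  have := (((hasDerivAt_id x).const_mul k).exp.sub_const 1).const_mul (A / k)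
  exact this.congr_deriv (by simp only [id]; field_simp; ring)

theorem linear_comparison_estimate_general (b c α : ℝ) (hc : 0 < c)
    (V₀ : ℝ → ℝ)
    (hV₀mono : AntitoneOn V₀ (Set.Ici 0)) (hα : V₀ 0 < α)
    (ℓ : ℝ → ℝ)
    (hℓnonneg : ∀ t ∈ Set.Ico (0:ℝ) b, 0 ≤ ℓ t)
    (hℓmono : MonotoneOn ℓ (Set.Ico 0 b))
    (v v' : ℝ → ℝ) (hv : ∀ t ∈ Set.Ico (0:ℝ) b, HasDerivAt v (v' t) t)
    (hv0 : v 0 = 0)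
    (hsub : ∀ t ∈ Set.Ico (0:ℝ) b, v' t - 2 * c * v t < 2 * (α - V₀ (ℓ t)))
    (v₀ : ℝ → ℝ)
    (hv₀ : ∀ t ∈ Set.Ico (0:ℝ) b,
      HasDerivAt v₀ (2 * c * v₀ t + 2 * (α - V₀ (ℓ t))) t)
    (hv₀0 : v₀ 0 = 0) :
    ∀ t ∈ Set.Ico (0:ℝ) b,
      v' t ≤ 2 * c * v₀ t + 2 * (α - V₀ (ℓ t)) ∧
      2 * c * v₀ t + 2 * (α - V₀ (ℓ t)) ≤ 2 * Real.exp (2 * c * b) * (α - V₀ (ℓ t)) := by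
  intro t ht
  set A := α - V₀ (ℓ t)
  have hIcc : Icc 0 t ⊆ Ico 0 b := Icc_subset_Ico_right ht.2
  have hA : 0 < A := by
    have := hV₀mono (le_refl (0 : ℝ)) (hℓnonneg t ht) (hℓnonneg t ht)
    simp only [A]; linarith
  have hV₀ℓ : ∀ s ∈ Icc 0 t, V₀ (ℓ t) ≤ V₀ (ℓ s) := fun s hs =>
    hV₀mono (hℓnonneg s (hIcc hs)) (hℓnonneg t ht) (hℓmono (hIcc hs) ht hs.2)
  have hv_le : v t ≤ v₀ t :=
    image_le_of_deriv_sub_mul_le (k := 2 * c) (fun s hs => hv s (hIcc hs))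
      (fun s hs => hv₀ s (hIcc hs)) (by rw [hv0, hv₀0])
      (fun s hs => by linarith [hsub s (hIcc (Ico_subset_Icc_self hs))])
      (right_mem_Icc.2 ht.1)
  have hv₀_le : v₀ t ≤ 2 * A / (2 * c) * (exp (2 * c * t) - 1) :=
    image_le_of_deriv_sub_mul_le (k := 2 * c) (fun s hs => hv₀ s (hIcc hs))
      (fun s _ => hasDerivAt_div_mul_exp_sub_one (by positivity) (2 * A) s) (by simp [hv₀0])
      (fun s hs => by linarith [hV₀ℓ s (Ico_subset_Icc_self hs)])
      (right_mem_Icc.2 ht.1)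
  constructor
  · nlinarith [hsub t ht]
  · calc 2 * c * v₀ t + 2 * A ≤ 2 * A * exp (2 * c * t) := by
          have := mul_le_mul_of_nonneg_left hv₀_le (by positivity : (0 : ℝ) ≤ 2 * c)
          field_simp at this
          linarith
      _ ≤ 2 * exp (2 * c * b) * A := by
          have : exp (2 * c * t) ≤ exp (2 * c * b) := by gcongr; exact ht.2.le
          nlinarith

/-- Central differential-inequality estimate: if `v' - 2c v < 2(α - 𝒱₀(ℓ(t)))` with
`v(0) = 0`, where `𝒱₀` is non-increasing C¹ with `α > 𝒱₀(0)` and `ℓ ≥ 0` is continuous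
non-decreasing, and `v₀` solves the associated linear equation with `v₀(0) = 0`, then
`v' ≤ v₀' ≤ 2e^{2cb}(α - 𝒱₀(ℓ(t)))` on `[0,b)`. -/
theorem linear_comparison_estimate (b c α : ℝ) (hb : 0 < b) (hc : 0 < c)
    (V₀ : ℝ → ℝ) (hV₀C1 : ContDiffOn ℝ 1 V₀ (Set.Ici 0))
    (hV₀mono : AntitoneOn V₀ (Set.Ici 0)) (hα : V₀ 0 < α)
    (ℓ : ℝ → ℝ) (hℓcont : ContinuousOn ℓ (Set.Ico 0 b))
    (hℓnonneg : ∀ t ∈ Set.Ico (0:ℝ) b, 0 ≤ ℓ t)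
    (hℓmono : MonotoneOn ℓ (Set.Ico 0 b))
    (v v' : ℝ → ℝ) (hv : ∀ t ∈ Set.Ico (0:ℝ) b, HasDerivAt v (v' t) t)
    (hv0 : v 0 = 0)
    (hsub : ∀ t ∈ Set.Ico (0:ℝ) b, v' t - 2 * c * v t < 2 * (α - V₀ (ℓ t)))
    (v₀ : ℝ → ℝ)
    (hv₀ : ∀ t ∈ Set.Ico (0:ℝ) b,
      HasDerivAt v₀ (2 * c * v₀ t + 2 * (α - V₀ (ℓ t))) t)
    (hv₀0 : v₀ 0 = 0) :
    ∀ t ∈ Set.Ico (0:ℝ) b,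
      v' t ≤ 2 * c * v₀ t + 2 * (α - V₀ (ℓ t)) ∧
      2 * c * v₀ t + 2 * (α - V₀ (ℓ t)) ≤ 2 * Real.exp (2 * c * b) * (α - V₀ (ℓ t)) :=
  linear_comparison_estimate_general b c α hc V₀ hV₀mono hα ℓ hℓnonneg hℓmono v v' hv hv0 hsub v₀
    hv₀ hv₀0
end

section
/- Let γ : [0,b) → ℝⁿ (0 < b < ∞) be a C² curve satisfying γ''(t) = F(γ(t),t)·γ'(t) + X(γ(t),t) for smooth maps F (matrix-valued) and X (vector-valued), where the symmetric part S of F satisfies ⟨v, S(p,t)v⟩ ≤ c|v|² for all (p,t) ∈ ℝⁿ × [0,b] and v ∈ ℝⁿ, and |X(p,t)| ≤ A|p| + C for all (p,t) ∈ ℝⁿ × [0,b]. If γ is forward inextensible as a solution, we get a contradiction; equivalently, |γ'| is bounded on [0,b) and γ extends to [0,b]. -/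
open Set

set_option maxHeartbeats 1000000 in
/-- Euclidean version of the main completeness theorem: if the symmetric part of the
velocity-dependent force `F` is upper bounded (`⟨v, F(p,t)v⟩ = ⟨v, S(p,t)v⟩ ≤ c|v|²`)
and the external force `X` grows at most linearly, then a solution of
`γ'' = F(γ,t)γ' + X(γ,t)` on a finite interval `[0,b)` has bounded speed, hence it is
not forward inextensible (it extends to `b`). -/
theorem euclidean_completeness (n : ℕ) (b c A C : ℝ) (hb : 0 < b)
    (F : EuclideanSpace ℝ (Fin n) × ℝ →
      EuclideanSpace ℝ (Fin n) →L[ℝ] EuclideanSpace ℝ (Fin n))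
    (X : EuclideanSpace ℝ (Fin n) × ℝ → EuclideanSpace ℝ (Fin n))
    (hF : ContDiff ℝ (⊤ : ℕ∞) F) (hX : ContDiff ℝ (⊤ : ℕ∞) X)
    (hS : ∀ (p : EuclideanSpace ℝ (Fin n)) (t : ℝ), t ∈ Set.Icc 0 b →
      ∀ v : EuclideanSpace ℝ (Fin n), (inner ℝ v (F (p, t) v) : ℝ) ≤ c * ‖v‖ ^ 2)
    (hXgrowth : ∀ (p : EuclideanSpace ℝ (Fin n)) (t : ℝ), t ∈ Set.Icc 0 b →
      ‖X (p, t)‖ ≤ A * ‖p‖ + C)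
    (γ γ' : ℝ → EuclideanSpace ℝ (Fin n))
    (hγ : ∀ t ∈ Set.Ico (0:ℝ) b, HasDerivAt γ (γ' t) t)
    (hγ' : ∀ t ∈ Set.Ico (0:ℝ) b, HasDerivAt γ' (F (γ t, t) (γ' t) + X (γ t, t)) t) :
    ∃ K : ℝ, ∀ t ∈ Set.Ico (0:ℝ) b, ‖γ' t‖ ≤ K := by
  classical
  set K0 : ℝ := 2 * |c| + |A| + 2 with hK0
  have hK0pos : 0 < K0 := by positivity
  set M : ℝ := |C| ^ 2 / K0 with hM
  have hMnonneg : 0 ≤ M := by positivity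
  set E : ℝ → ℝ := fun t => (inner ℝ (γ' t) (γ' t) : ℝ) + (inner ℝ (γ t) (γ t) : ℝ) with hEdef
  have hEeq : ∀ t, E t = ‖γ' t‖ ^ 2 + ‖γ t‖ ^ 2 := by
    intro t; simp only [hEdef, real_inner_self_eq_norm_sq]
  have hEnonneg : ∀ t, 0 ≤ E t := by
    intro t; rw [hEeq]; positivity
  -- derivative of E
  set γ'' : ℝ → EuclideanSpace ℝ (Fin n) := fun t => F (γ t, t) (γ' t) + X (γ t, t) with hγ''
  set E' : ℝ → ℝ := fun t =>
    ((inner ℝ (γ' t) (γ'' t) : ℝ) + (inner ℝ (γ'' t) (γ' t) : ℝ)) +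
      ((inner ℝ (γ t) (γ' t) : ℝ) + (inner ℝ (γ' t) (γ t) : ℝ)) with hE'def
  have hE : ∀ t ∈ Set.Ico (0:ℝ) b, HasDerivAt E (E' t) t := by
    intro t ht
    exact ((hγ' t ht).inner ℝ (hγ' t ht)).add ((hγ t ht).inner ℝ (hγ t ht))
  -- bound on E'
  have hE'le : ∀ t ∈ Set.Ico (0:ℝ) b, E' t ≤ K0 * E t + |C| ^ 2 := by
    intro t ht
    have htcc : t ∈ Set.Icc (0:ℝ) b := ⟨ht.1, ht.2.le⟩
    set v := γ' t with hv
    set p := γ t with hp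
    have h1 : (inner ℝ v (F (p, t) v) : ℝ) ≤ c * ‖v‖ ^ 2 := hS p t htcc v
    have h2 : ‖X (p, t)‖ ≤ A * ‖p‖ + C := hXgrowth p t htcc
    have h3 : (inner ℝ v (X (p, t)) : ℝ) ≤ ‖v‖ * ‖X (p, t)‖ := real_inner_le_norm _ _
    have h4 : (inner ℝ v p : ℝ) ≤ ‖v‖ * ‖p‖ := real_inner_le_norm _ _
    have h5 : (inner ℝ v (γ'' t) : ℝ) = (inner ℝ v (F (p, t) v) : ℝ) + (inner ℝ v (X (p, t)) : ℝ) := by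
      simp [hγ'', inner_add_right, ← hv, ← hp]
    have h6 : E' t = 2 * (inner ℝ v (γ'' t) : ℝ) + 2 * (inner ℝ v p : ℝ) := by
      simp only [hE'def]
      rw [real_inner_comm (γ'' t) (γ' t), real_inner_comm (γ t) (γ' t)]
      ring
    have hc : c ≤ |c| := le_abs_self c
    have hA : A ≤ |A| := le_abs_self A
    have hC : C ≤ |C| := le_abs_self C
    have hvn : (0:ℝ) ≤ ‖v‖ := norm_nonneg _
    have hpn : (0:ℝ) ≤ ‖p‖ := norm_nonneg _
    have hXn : (0:ℝ) ≤ ‖X (p, t)‖ := norm_nonneg _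
    rw [h6, hEeq, ← hv, ← hp]
    have hvX : (inner ℝ v (X (p, t)) : ℝ) ≤ ‖v‖ * (|A| * ‖p‖ + |C|) := by
      calc (inner ℝ v (X (p, t)) : ℝ) ≤ ‖v‖ * ‖X (p, t)‖ := h3
        _ ≤ ‖v‖ * (|A| * ‖p‖ + |C|) := by
            apply mul_le_mul_of_nonneg_left _ hvn
            nlinarith
    have hcv : c * ‖v‖ ^ 2 ≤ |c| * ‖v‖ ^ 2 :=
      mul_le_mul_of_nonneg_right hc (sq_nonneg _)
    have key : (inner ℝ v (γ'' t) : ℝ) ≤ |c| * ‖v‖ ^ 2 + ‖v‖ * (|A| * ‖p‖ + |C|) := by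
      linarith
    nlinarith [key, h4, sq_nonneg (‖v‖ - ‖p‖), sq_nonneg (‖v‖ - |C|),
      mul_nonneg (abs_nonneg A) (sq_nonneg (‖v‖ - ‖p‖)),
      mul_nonneg (abs_nonneg c) (sq_nonneg ‖p‖), sq_nonneg ‖p‖]
  -- the auxiliary function g is antitone
  set g : ℝ → ℝ := fun t => (E t + M) * Real.exp (-K0 * t) with hg
  have hgderiv : ∀ t ∈ Set.Ico (0:ℝ) b,
      HasDerivAt g ((E' t) * Real.exp (-K0 * t) + (E t + M) * (Real.exp (-K0 * t) * (-K0))) t := by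
    intro t ht
    have h1 : HasDerivAt (fun s => E s + M) (E' t) t := (hE t ht).add_const M
    have h2 : HasDerivAt (fun s : ℝ => Real.exp (-K0 * s)) (Real.exp (-K0 * t) * (-K0)) t := by
      simpa using ((hasDerivAt_id t).const_mul (-K0)).exp
    exact h1.mul h2
  have hganti : AntitoneOn g (Set.Ico 0 b) := by
    apply antitoneOn_of_deriv_nonpos (convex_Ico 0 b)
    · intro t ht
      exact ((hgderiv t ht).continuousAt).continuousWithinAt
    · intro t ht
      rw [interior_Ico] at ht
      exact (hgderiv t ⟨ht.1.le, ht.2⟩).differentiableAt.differentiableWithinAt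
    · intro t ht
      rw [interior_Ico] at ht
      have ht' : t ∈ Set.Ico (0:ℝ) b := ⟨ht.1.le, ht.2⟩
      rw [(hgderiv t ht').deriv]
      have hexp : 0 < Real.exp (-K0 * t) := Real.exp_pos _
      have hb1 : E' t ≤ K0 * E t + |C| ^ 2 := hE'le t ht'
      have : (E' t) * Real.exp (-K0 * t) + (E t + M) * (Real.exp (-K0 * t) * (-K0))
          = (E' t - K0 * (E t + M)) * Real.exp (-K0 * t) := by ring
      rw [this]
      apply mul_nonpos_of_nonpos_of_nonneg _ hexp.le
      have hMK : K0 * M = |C| ^ 2 := by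
        rw [hM]; field_simp [hK0pos.ne']
      nlinarith
  -- conclude
  set B : ℝ := (E 0 + M) * Real.exp (K0 * b) with hB
  have hBnonneg : 0 ≤ B := by
    rw [hB]
    exact mul_nonneg (by linarith [hEnonneg 0]) (Real.exp_pos _).le
  refine ⟨Real.sqrt B, fun t ht => ?_⟩
  have h0mem : (0:ℝ) ∈ Set.Ico (0:ℝ) b := ⟨le_refl _, hb⟩
  have hgle : g t ≤ g 0 := hganti h0mem ht ht.1
  have hEt : E t + M ≤ (E 0 + M) * Real.exp (K0 * t) := by
    have h1 : (E t + M) * Real.exp (-K0 * t) ≤ (E 0 + M) := by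
      simpa [hg] using hgle
    have hexp : 0 < Real.exp (-K0 * t) := Real.exp_pos _
    have := mul_le_mul_of_nonneg_right h1 (Real.exp_pos (K0 * t)).le
    calc E t + M = (E t + M) * Real.exp (-K0 * t) * Real.exp (K0 * t) := by
          rw [mul_assoc, ← Real.exp_add]; simp
      _ ≤ (E 0 + M) * Real.exp (K0 * t) := this
  have hexple : Real.exp (K0 * t) ≤ Real.exp (K0 * b) := by
    apply Real.exp_le_exp.2
    exact mul_le_mul_of_nonneg_left ht.2.le hK0pos.le
  have hEtB : E t ≤ B := by
    have h0 : 0 ≤ E 0 + M := add_nonneg (hEnonneg 0) hMnonneg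
    calc E t ≤ E t + M := le_add_of_nonneg_right hMnonneg
      _ ≤ (E 0 + M) * Real.exp (K0 * t) := hEt
      _ ≤ (E 0 + M) * Real.exp (K0 * b) := mul_le_mul_of_nonneg_left hexple h0
  rw [Real.le_sqrt (norm_nonneg _) hBnonneg]
  calc ‖γ' t‖ ^ 2 ≤ E t := by rw [hEeq]; nlinarith [sq_nonneg ‖γ t‖]
    _ ≤ B := hEtB
end

section
/- Let γ : [0,b) → ℝⁿ (0 < b < ∞) be a C² solution of γ''(t) = -∇V(γ(t)) where V : ℝⁿ → ℝ is smooth and satisfies -V(p) ≤ A|p|² + C for all p and some constants A, C > 0. Then |γ'| is bounded on [0,b), and hence γ extends continuously (with its derivative) to t = b. -/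
open Set Filter

open scoped RealInnerProductSpace

lemma exists_tendsto_of_lip {E : Type*} [NormedAddCommGroup E] [CompleteSpace E]
    {f : ℝ → E} {b L : ℝ} (hb : 0 < b)
    (h : ∀ x ∈ Set.Ico (0:ℝ) b, ∀ y ∈ Set.Ico (0:ℝ) b, ‖f x - f y‖ ≤ L * |x - y|) :
    ∃ l, Tendsto f (nhdsWithin b (Set.Iio b)) (nhds l) := by
  rw [← cauchy_map_iff_exists_tendsto]
  rw [cauchy_map_iff']
  rw [Metric.uniformity_basis_dist.tendsto_right_iff]
  intro ε hε
  set δ := ε / (|L| + 1) with hδdef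
  have hδ : 0 < δ := div_pos hε (by positivity)
  set a0 := max (b - δ) (b / 2) with ha0
  have ha0b : a0 < b := by
    apply max_lt <;> linarith
  have hS : Set.Ioo a0 b ∈ nhdsWithin b (Set.Iio b) :=
    Ioo_mem_nhdsLT_of_mem ⟨ha0b, le_refl _⟩
  filter_upwards [Filter.prod_mem_prod hS hS] with p hp
  obtain ⟨hp1, hp2⟩ := hp
  have hx : p.1 ∈ Set.Ico (0:ℝ) b := ⟨by nlinarith [hp1.1, le_max_right (b - δ) (b/2)], hp1.2⟩
  have hy : p.2 ∈ Set.Ico (0:ℝ) b := ⟨by nlinarith [hp2.1, le_max_right (b - δ) (b/2)], hp2.2⟩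
  have hd : |p.1 - p.2| < δ := by
    have h1 : b - δ ≤ a0 := le_max_left _ _
    rw [abs_sub_lt_iff]
    constructor <;> nlinarith [hp1.1, hp1.2, hp2.1, hp2.2]
  simp only [Set.mem_setOf_eq, dist_eq_norm]
  calc ‖f p.1 - f p.2‖ ≤ L * |p.1 - p.2| := h _ hx _ hy
    _ ≤ |L| * |p.1 - p.2| := by
        apply mul_le_mul_of_nonneg_right (le_abs_self L) (abs_nonneg _)
    _ < ε := by
        have h1 : |L| * |p.1 - p.2| ≤ |L| * δ := mul_le_mul_of_nonneg_left hd.le (abs_nonneg _)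
        have h2 : |L| * δ < ε := by
          rw [hδdef, mul_comm, div_mul_eq_mul_div, div_lt_iff₀ (by positivity)]
          nlinarith [abs_nonneg L]
        linarith

/-- Euclidean Weinstein–Marsden criterion: if `-V(p) ≤ A|p|² + C` and
`γ'' = -∇V(γ)` on a finite interval `[0,b)`, then the speed `|γ'|` is bounded and
both `γ` and `γ'` extend continuously to `t = b`. -/
theorem weinstein_marsden_euclidean (n : ℕ) (b A C : ℝ) (hb : 0 < b)
    (hA : 0 < A) (hC : 0 < C)
    (V : EuclideanSpace ℝ (Fin n) → ℝ) (hV : ContDiff ℝ (⊤ : ℕ∞) V)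
    (hquad : ∀ p : EuclideanSpace ℝ (Fin n), -V p ≤ A * ‖p‖ ^ 2 + C)
    (γ γ' : ℝ → EuclideanSpace ℝ (Fin n))
    (hγ : ∀ t ∈ Set.Ico (0:ℝ) b, HasDerivAt γ (γ' t) t)
    (hγ' : ∀ t ∈ Set.Ico (0:ℝ) b, HasDerivAt γ' (-gradient V (γ t)) t) :
    (∃ K : ℝ, ∀ t ∈ Set.Ico (0:ℝ) b, ‖γ' t‖ ≤ K) ∧
    (∃ γb γ'b : EuclideanSpace ℝ (Fin n),
      Filter.Tendsto γ (nhdsWithin b (Set.Iio b)) (nhds γb) ∧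
      Filter.Tendsto γ' (nhdsWithin b (Set.Iio b)) (nhds γ'b)) := by
  have hVd : Differentiable ℝ V := hV.differentiable (by simp)
  have h0 : (0:ℝ) ∈ Set.Ico (0:ℝ) b := ⟨le_refl _, hb⟩
  -- energy function (times 2)
  set e : ℝ → ℝ := fun s => ⟪γ' s, γ' s⟫ + 2 * V (γ s) with he
  -- derivative of V ∘ γ
  have hVγ : ∀ t ∈ Set.Ico (0:ℝ) b,
      HasDerivAt (fun s => V (γ s)) ⟪gradient V (γ t), γ' t⟫ t := by
    intro t ht
    have hg : HasGradientAt V (gradient V (γ t)) (γ t) := (hVd (γ t)).hasGradientAt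
    have := hg.hasFDerivAt.comp_hasDerivAt t (hγ t ht)
    replace this : HasDerivAt (fun s => V (γ s)) _ t := this
    simpa [InnerProductSpace.toDual_apply_apply] using this
  have hE : ∀ t ∈ Set.Ico (0:ℝ) b, HasDerivAt e 0 t := by
    intro t ht
    have h1 := ((hγ' t ht).inner (𝕜 := ℝ) (hγ' t ht)).add ((hVγ t ht).const_mul 2)
    replace h1 : HasDerivAt e _ t := h1
    convert h1 using 1
    simp [inner_neg_left, inner_neg_right, real_inner_comm (γ' t) (gradient V (γ t))]
    ring
  -- energy conservation
  have hconst : ∀ t ∈ Set.Ico (0:ℝ) b, e t = e 0 := by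
    intro t ht
    have hsub : Set.Icc (0:ℝ) t ⊆ Set.Ico 0 b := fun x hx => ⟨hx.1, lt_of_le_of_lt hx.2 ht.2⟩
    have hcont : ContinuousOn e (Set.Icc 0 t) := fun x hx =>
      ((hE x (hsub hx)).continuousAt).continuousWithinAt
    have := constant_of_has_deriv_right_zero hcont
      (fun x hx => ((hE x (hsub (Set.Ico_subset_Icc_self hx))).hasDerivWithinAt))
    exact this t ⟨ht.1, le_refl _⟩
  -- speed bound from energy
  set D := max (e 0 + 2 * C) 0 with hD
  have hD0 : 0 ≤ D := le_max_right _ _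
  have hsq : ∀ t ∈ Set.Ico (0:ℝ) b, ‖γ' t‖ ^ 2 ≤ 2 * A * ‖γ t‖ ^ 2 + D := by
    intro t ht
    have h1 := hconst t ht
    have h2 := hquad (γ t)
    have h3 : ⟪γ' t, γ' t⟫ = ‖γ' t‖ ^ 2 := real_inner_self_eq_norm_sq _
    have h4 : e 0 + 2 * C ≤ D := le_max_left _ _
    have h5 : e 0 = ⟪γ' 0, γ' 0⟫ + 2 * V (γ 0) := rfl
    have h6 : e t = ⟪γ' t, γ' t⟫ + 2 * V (γ t) := rfl
    nlinarith
  set K := Real.sqrt (2 * A) with hK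
  set ε := Real.sqrt D with hε
  have hKpos : 0 < K := Real.sqrt_pos.2 (by linarith)
  have hε0 : 0 ≤ ε := Real.sqrt_nonneg _
  have hK2 : K ^ 2 = 2 * A := Real.sq_sqrt (by linarith)
  have hε2 : ε ^ 2 = D := Real.sq_sqrt hD0
  have hspeed : ∀ t ∈ Set.Ico (0:ℝ) b, ‖γ' t‖ ≤ K * ‖γ t‖ + ε := by
    intro t ht
    have h1 := hsq t ht
    have hc0 : 0 ≤ K * ‖γ t‖ + ε := add_nonneg (mul_nonneg hKpos.le (norm_nonneg _)) hε0
    calc ‖γ' t‖ = Real.sqrt (‖γ' t‖ ^ 2) := (Real.sqrt_sq (norm_nonneg _)).symm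
      _ ≤ Real.sqrt ((K * ‖γ t‖ + ε) ^ 2) := by
          apply Real.sqrt_le_sqrt
          nlinarith [mul_nonneg (mul_nonneg hKpos.le (norm_nonneg (γ t))) hε0]
      _ = K * ‖γ t‖ + ε := Real.sqrt_sq hc0
  -- Gronwall: position bound
  set M := gronwallBound ‖γ 0‖ K ε b with hM
  have hpos_bound : ∀ t ∈ Set.Ico (0:ℝ) b, ‖γ t‖ ≤ M := by
    intro t ht
    have hsub : Set.Icc (0:ℝ) t ⊆ Set.Ico 0 b := fun x hx => ⟨hx.1, lt_of_le_of_lt hx.2 ht.2⟩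
    have hcont : ContinuousOn γ (Set.Icc 0 t) := fun x hx =>
      ((hγ x (hsub hx)).continuousAt).continuousWithinAt
    have hgw := norm_le_gronwallBound_of_norm_deriv_right_le hcont
      (fun x hx => (hγ x (hsub (Set.Ico_subset_Icc_self hx))).hasDerivWithinAt)
      (le_refl ‖γ 0‖) (fun x hx => hspeed x (hsub (Set.Ico_subset_Icc_self hx)))
      t ⟨ht.1, le_refl _⟩
    refine hgw.trans ?_
    rw [hM]
    simp only [gronwallBound_of_K_ne_0 hKpos.ne']
    have hexp : Real.exp (K * (t - 0)) ≤ Real.exp (K * b) := by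
      apply Real.exp_le_exp.2
      apply mul_le_mul_of_nonneg_left (by linarith [ht.2]) hKpos.le
    have hd1 : 0 ≤ ε / K := div_nonneg hε0 hKpos.le
    have h1 := mul_le_mul_of_nonneg_left hexp (norm_nonneg (γ 0))
    have h2 := mul_le_mul_of_nonneg_left hexp hd1
    linarith
  have hM0 : 0 ≤ M := le_trans (norm_nonneg _) (hpos_bound 0 h0)
  -- speed bound
  set Ksp := K * M + ε with hKsp
  have hKsp_bound : ∀ t ∈ Set.Ico (0:ℝ) b, ‖γ' t‖ ≤ Ksp := by
    intro t ht
    refine (hspeed t ht).trans ?_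
    have := hpos_bound t ht
    nlinarith
  have hKsp0 : 0 ≤ Ksp := le_trans (norm_nonneg _) (hKsp_bound 0 h0)
  refine ⟨⟨Ksp, hKsp_bound⟩, ?_⟩
  -- bound for gradient on compact ball
  have hgradcont : Continuous (fun p : EuclideanSpace ℝ (Fin n) => gradient V p) := by
    have h1 : Continuous (fun p => fderiv ℝ V p) := (hV.continuous_fderiv (by simp))
    exact ((InnerProductSpace.toDual ℝ (EuclideanSpace ℝ (Fin n))).symm.continuous).comp h1
  obtain ⟨L, hL⟩ : ∃ L, ∀ p ∈ Metric.closedBall (0 : EuclideanSpace ℝ (Fin n)) M,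
      ‖gradient V p‖ ≤ L := by
    obtain ⟨L, hL⟩ := (isCompact_closedBall (0 : EuclideanSpace ℝ (Fin n)) M).exists_bound_of_continuousOn
      (hgradcont.continuousOn (s := Metric.closedBall 0 M))
    exact ⟨L, hL⟩
  have hL0 : 0 ≤ L := le_trans (norm_nonneg _) (hL (γ 0) (by
    simpa [Metric.mem_closedBall, dist_zero_right] using hpos_bound 0 h0))
  -- Lipschitz estimates (ordered version)
  have lipaux : ∀ (f f' : ℝ → EuclideanSpace ℝ (Fin n)) (Cf : ℝ),
      (∀ t ∈ Set.Ico (0:ℝ) b, HasDerivAt f (f' t) t) →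
      (∀ t ∈ Set.Ico (0:ℝ) b, ‖f' t‖ ≤ Cf) →
      ∀ x ∈ Set.Ico (0:ℝ) b, ∀ y ∈ Set.Ico (0:ℝ) b, ‖f x - f y‖ ≤ Cf * |x - y| := by
    intro f f' Cf hf hbd
    have key : ∀ x ∈ Set.Ico (0:ℝ) b, ∀ y ∈ Set.Ico (0:ℝ) b, x ≤ y → ‖f y - f x‖ ≤ Cf * (y - x) := by
      intro x hx y hy hxy
      have hsub : Set.Icc x y ⊆ Set.Ico 0 b := fun z hz => ⟨le_trans hx.1 hz.1, lt_of_le_of_lt hz.2 hy.2⟩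
      exact norm_image_sub_le_of_norm_deriv_le_segment'
        (fun z hz => (hf z (hsub hz)).hasDerivWithinAt)
        (fun z hz => hbd z (hsub (Set.Ico_subset_Icc_self hz)))
        y ⟨hxy, le_refl _⟩
    intro x hx y hy
    rcases le_total x y with h | h
    · rw [abs_of_nonpos (by linarith), ← norm_neg]
      simpa using key x hx y hy h
    · rw [abs_of_nonneg (by linarith)]
      exact key y hy x hx h
  have hlipγ : ∀ x ∈ Set.Ico (0:ℝ) b, ∀ y ∈ Set.Ico (0:ℝ) b, ‖γ x - γ y‖ ≤ Ksp * |x - y| :=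
    lipaux γ γ' Ksp hγ hKsp_bound
  have hlipγ' : ∀ x ∈ Set.Ico (0:ℝ) b, ∀ y ∈ Set.Ico (0:ℝ) b, ‖γ' x - γ' y‖ ≤ L * |x - y| := by
    apply lipaux γ' (fun t => -gradient V (γ t)) L hγ'
    intro t ht
    rw [norm_neg]
    apply hL
    simpa [Metric.mem_closedBall, dist_zero_right] using hpos_bound t ht
  obtain ⟨γb, hγb⟩ := exists_tendsto_of_lip hb hlipγ
  obtain ⟨γ'b, hγ'b⟩ := exists_tendsto_of_lip hb hlipγ'
  exact ⟨γb, γ'b, hγb, hγ'b⟩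
end

section
/- Let u : [0,b) → [0,∞) be continuous, v(t) = ∫₀^t u(s) ds, and suppose v satisfies v'(t) - 2N·v(t) ≤ 2(α + A·ℓ(t)² ), where ℓ(t) = ℓ₀ + ∫₀^t √(u(s)) ds for constants N, A, α, ℓ₀ ≥ 0 and 0 < b < ∞. Then u is bounded on [0,b). -/
/-!
The energy `E = v + ℓ²` controls the right-hand side: `u ≤ (2N + 2A) E + 2α`.
Since `ℓ' = √u`, AM-GM gives `E' = u + 2ℓ√u ≤ 2u + ℓ² ≤ (4N + 4A + 1) E + 4α`,
so by Grönwall's inequality `E` stays below `gronwallBound (ℓ₀²) (4N + 4A + 1) (4α) b`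
on `[0, b)`, which is finite because `b` is; this bound on `E` then bounds `u`.
-/

open Set intervalIntegral

section Primitive

variable {E : Type*} [NormedAddCommGroup E] [NormedSpace ℝ E] {f : ℝ → E} {a b t : ℝ}

theorem continuousOn_Ico_primitive_of_continuousOn_Ico (hf : ContinuousOn f (Ico a b)) :
    ContinuousOn (fun y => ∫ s in a..y, f s) (Ico a b) := by
  intro t ht
  obtain ⟨t', htt', ht'b⟩ := exists_between ht.2
  have hint : MeasureTheory.IntegrableOn f (uIcc a t') := by
    rw [uIcc_of_le (ht.1.trans htt'.le)]
    exact (hf.mono (Icc_subset_Ico_right ht'b)).integrableOn_Icc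
  have hprim := continuousOn_primitive_interval hint
  rw [uIcc_of_le (ht.1.trans htt'.le)] at hprim
  refine (hprim t ⟨ht.1, htt'.le⟩).mono_of_mem_nhdsWithin ?_
  filter_upwards [self_mem_nhdsWithin, nhdsWithin_le_nhds (Iio_mem_nhds htt')] with y hy hyt'
  exact ⟨hy.1, hyt'.le⟩

theorem hasDerivWithinAt_primitive_Ici_of_continuousOn_Ico [CompleteSpace E]
    (hf : ContinuousOn f (Ico a b)) (ht : t ∈ Ico a b) :
    HasDerivWithinAt (fun y => ∫ s in a..y, f s) (f t) (Ici t) t := by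
  have hnhds : Ico a b ∈ nhdsWithin t (Ioi t) :=
    mem_nhdsWithin.2 ⟨Iio b, isOpen_Iio, ht.2, fun y hy => ⟨ht.1.trans hy.2.le, hy.1⟩⟩
  refine integral_hasDerivWithinAt_right ?_
    ⟨Ico a b, hnhds, hf.aestronglyMeasurable measurableSet_Ico⟩
    ((hf t ht).mono_of_mem_nhdsWithin hnhds)
  exact (hf.mono (Icc_subset_Ico_right ht.2)).intervalIntegrable_of_Icc ht.1

end Primitive

theorem integral_nonneg_of_nonneg_Ico {f : ℝ → ℝ} {a b t : ℝ}
    (hf : ∀ s ∈ Ico a b, 0 ≤ f s) (ht : t ∈ Ico a b) : 0 ≤ ∫ s in a..t, f s :=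
  integral_nonneg ht.1 fun s hs => hf s ⟨hs.1, hs.2.trans_lt ht.2⟩

theorem le_gronwallBound_of_deriv_right_le_Ico {f f' : ℝ → ℝ} {δ K ε a b : ℝ}
    (hδ : 0 ≤ δ) (hK : 0 ≤ K) (hε : 0 ≤ ε) (hf : ContinuousOn f (Ico a b))
    (hf' : ∀ x ∈ Ico a b, HasDerivWithinAt f (f' x) (Ici x) x) (ha : f a ≤ δ)
    (bound : ∀ x ∈ Ico a b, f' x ≤ K * f x + ε) :
    ∀ x ∈ Ico a b, f x ≤ gronwallBound δ K ε (b - a) := by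
  intro x hx
  have hsub : Ico a x ⊆ Ico a b := Ico_subset_Ico_right hx.2.le
  calc f x ≤ gronwallBound δ K ε (x - a) :=
        le_gronwallBound_of_liminf_deriv_right_le (hf.mono (Icc_subset_Ico_right hx.2))
          (fun y hy _ hr => (hf' y (hsub hy)).liminf_right_slope_le hr) ha
          (fun y hy => bound y (hsub hy)) x ⟨hx.1, le_rfl⟩
    _ ≤ gronwallBound δ K ε (b - a) := gronwallBound_mono hδ hε hK (by linarith [hx.2])

theorem integral_add_sq_integral_sqrt_le_gronwallBound {u : ℝ → ℝ} {a b c ε ℓ₀ : ℝ}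
    (hc : 0 ≤ c) (hε : 0 ≤ ε) (hcont : ContinuousOn u (Ico a b))
    (hnonneg : ∀ t ∈ Ico a b, 0 ≤ u t)
    (hu : ∀ t ∈ Ico a b,
      u t ≤ c * ((∫ s in a..t, u s) + (ℓ₀ + ∫ s in a..t, √(u s)) ^ 2) + ε) :
    ∀ t ∈ Ico a b, (∫ s in a..t, u s) + (ℓ₀ + ∫ s in a..t, √(u s)) ^ 2 ≤
      gronwallBound (ℓ₀ ^ 2) (2 * c + 1) (2 * ε) (b - a) := by
  have hcont_sqrt : ContinuousOn (fun s => √(u s)) (Ico a b) :=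
    Real.continuous_sqrt.comp_continuousOn hcont
  refine le_gronwallBound_of_deriv_right_le_Ico
    (f' := fun t => u t + 2 * (ℓ₀ + ∫ s in a..t, √(u s)) * √(u t)) (sq_nonneg ℓ₀)
    (by positivity) (by positivity) ?_ ?_ (by simp) ?_
  · exact (continuousOn_Ico_primitive_of_continuousOn_Ico hcont).add
      ((continuousOn_const.add (continuousOn_Ico_primitive_of_continuousOn_Ico hcont_sqrt)).pow 2)
  · intro t ht
    have hℓ := (hasDerivWithinAt_primitive_Ici_of_continuousOn_Ico hcont_sqrt ht).const_add ℓ₀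
    refine ((hasDerivWithinAt_primitive_Ici_of_continuousOn_Ico hcont ht).add
      (hℓ.pow 2)).congr_deriv ?_
    push_cast
    ring
  · intro t ht
    have hamgm := two_mul_le_add_sq (ℓ₀ + ∫ s in a..t, √(u s)) √(u t)
    rw [Real.sq_sqrt (hnonneg t ht)] at hamgm
    have hV := integral_nonneg_of_nonneg_Ico hnonneg ht
    nlinarith [hu t ht]

theorem nonautonomous_energy_bound_general (u : ℝ → ℝ) (b N A α ℓ₀ : ℝ)
    (hN : 0 ≤ N) (hA : 0 ≤ A) (hα : 0 ≤ α)
    (hcont : ContinuousOn u (Set.Ico 0 b))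
    (hnonneg : ∀ t ∈ Set.Ico (0:ℝ) b, 0 ≤ u t)
    (hineq : ∀ t ∈ Set.Ico (0:ℝ) b,
      u t - 2 * N * (∫ s in (0:ℝ)..t, u s) ≤
        2 * (α + A * (ℓ₀ + ∫ s in (0:ℝ)..t, Real.sqrt (u s)) ^ 2)) :
    ∃ K : ℝ, ∀ t ∈ Set.Ico (0:ℝ) b, u t ≤ K := by
  have hu : ∀ t ∈ Ico (0:ℝ) b, u t ≤ (2 * N + 2 * A) *
      ((∫ s in (0:ℝ)..t, u s) + (ℓ₀ + ∫ s in (0:ℝ)..t, √(u s)) ^ 2) + 2 * α := by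
    intro t ht
    nlinarith [hineq t ht, mul_nonneg hA (integral_nonneg_of_nonneg_Ico hnonneg ht),
      mul_nonneg hN (sq_nonneg (ℓ₀ + ∫ s in (0:ℝ)..t, √(u s)))]
  have henergy := integral_add_sq_integral_sqrt_le_gronwallBound (by positivity) (by positivity)
    hcont hnonneg hu
  exact ⟨_, fun t ht => (hu t ht).trans
    (add_le_add_left (mul_le_mul_of_nonneg_left (henergy t ht) (by positivity)) _)⟩

/-- Key analytic step of the non-autonomous completeness theorem: if `u ≥ 0` is
continuous on `[0,b)` (`0 < b < ∞`), `v(t) = ∫₀^t u`, `ℓ(t) = ℓ₀ + ∫₀^t √u`, and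
`v'(t) - 2N v(t) ≤ 2(α + A ℓ(t)²)` (i.e. `u(t) - 2N ∫₀^t u ≤ 2(α + A ℓ(t)²)`),
then `u` is bounded on `[0,b)`. -/
theorem nonautonomous_energy_bound (u : ℝ → ℝ) (b N A α ℓ₀ : ℝ)
    (hb : 0 < b) (hN : 0 ≤ N) (hA : 0 ≤ A) (hα : 0 ≤ α) (hℓ₀ : 0 ≤ ℓ₀)
    (hcont : ContinuousOn u (Set.Ico 0 b))
    (hnonneg : ∀ t ∈ Set.Ico (0:ℝ) b, 0 ≤ u t)
    (hineq : ∀ t ∈ Set.Ico (0:ℝ) b,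
      u t - 2 * N * (∫ s in (0:ℝ)..t, u s) ≤
        2 * (α + A * (ℓ₀ + ∫ s in (0:ℝ)..t, Real.sqrt (u s)) ^ 2)) :
    ∃ K : ℝ, ∀ t ∈ Set.Ico (0:ℝ) b, u t ≤ K :=
  nonautonomous_energy_bound_general u b N A α ℓ₀ hN hA hα hcont hnonneg hineq
end
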